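/- Define g(y) = 1 − 4 / ( 4 + y + √( (4+y)² − 8·(1+2y²) ) ) for y ∈ [0, 1/2]. Then (4+y)² − 8·(1+2y²) > 0 for all y ∈ [0,1/2], the maximum of g over [0,1/2] is attained at y = (8 + √34)/30, and this maximum value equals √34/4 − 1. -/
import Mathlib


/-- The function `g(y) = 1 − 4/(4 + y + √((4+y)² − 8(1+2y²)))`. -/
noncomputable def gFun (y : ℝ) : ℝ :=
  1 - 4 / (4 + y + Real.sqrt ((4 + y) ^ 2 - 8 * (1 + 2 * y ^ 2)))

/-- On `[0,1/2]` the radicand `(4+y)² − 8(1+2y²)` is positive, and the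
maximum of `g` over `[0,1/2]` is attained at `y = (8+√34)/30`, with value `√34/4 − 1`. -/
theorem stmt_16 :
    (∀ y ∈ Set.Icc (0:ℝ) (1/2), 0 < (4 + y) ^ 2 - 8 * (1 + 2 * y ^ 2)) ∧
    (8 + Real.sqrt 34) / 30 ∈ Set.Icc (0:ℝ) (1/2) ∧
    gFun ((8 + Real.sqrt 34) / 30) = Real.sqrt 34 / 4 - 1 ∧
    ∀ y ∈ Set.Icc (0:ℝ) (1/2), gFun y ≤ Real.sqrt 34 / 4 - 1 := by
  set s := Real.sqrt 34 with hs
  have hs2 : s ^ 2 = 34 := Real.sq_sqrt (by norm_num)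
  have hs0 : 0 ≤ s := Real.sqrt_nonneg 34
  have hs5 : 5 < s := by nlinarith
  have hs6 : s < 6 := by nlinarith
  have hpos : ∀ y ∈ Set.Icc (0:ℝ) (1/2), 0 < (4 + y) ^ 2 - 8 * (1 + 2 * y ^ 2) := by
    intro y hy
    obtain ⟨h0, h1⟩ := hy
    nlinarith [mul_nonneg h0 (sub_nonneg.mpr h1)]
  refine ⟨hpos, ⟨by positivity, by nlinarith⟩, ?_, ?_⟩
  · -- equality at y* = (8+s)/30
    have hrad : (4 + (8 + s) / 30) ^ 2 - 8 * (1 + 2 * ((8 + s) / 30) ^ 2) = (s / 2) ^ 2 := by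
      field_simp
      linear_combination (-(960:ℝ)) * hs2
    rw [gFun, hrad, Real.sqrt_sq (by positivity)]
    have hD : (0:ℝ) < 4 + (8 + s) / 30 + s / 2 := by positivity
    field_simp
    nlinarith [hs2]
  · intro y hy
    obtain ⟨h0, h1⟩ := hy
    have hR := hpos y ⟨h0, h1⟩
    have hB : (0:ℝ) ≤ (4 + 8 * s - 15 * y) / 15 := by nlinarith
    have hle : Real.sqrt ((4 + y) ^ 2 - 8 * (1 + 2 * y ^ 2)) ≤ (4 + 8 * s - 15 * y) / 15 := by
      rw [show (4 + 8 * s - 15 * y) / 15 = Real.sqrt (((4 + 8 * s - 15 * y) / 15) ^ 2) from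
        (Real.sqrt_sq hB).symm]
      apply Real.sqrt_le_sqrt
      nlinarith [sq_nonneg (30 * y - 8 - s), hs2]
    have hsq : 0 ≤ Real.sqrt ((4 + y) ^ 2 - 8 * (1 + 2 * y ^ 2)) := Real.sqrt_nonneg _
    have hD : (0:ℝ) < 4 + y + Real.sqrt ((4 + y) ^ 2 - 8 * (1 + 2 * y ^ 2)) := by linarith
    have h1' : (8 - s) / 4 ≤ 4 / (4 + y + Real.sqrt ((4 + y) ^ 2 - 8 * (1 + 2 * y ^ 2))) := by
      rw [div_le_div_iff₀ (by norm_num) hD]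
      nlinarith [hs2]
    rw [gFun]
    linarith
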